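/- arXiv:2502.12888 — 4 statements merged into one kernel-verified Lean document; each statement's English description precedes it below -/
import Mathlib

section
/- Every hyperbolic Laurent polynomial P(z) with complex coefficients (i.e., P(z) ≠ 0 for all z ∈ ℂ with |z| = 1, and P not identically zero) has an absolutely summable convolution inverse as a bi-infinite sequence: there exists an absolutely summable B : ℤ → ℂ with P × B = I. -/
/-!
Over `ℂ` a Laurent polynomial factors as `c T^m ∏ (T - r)` over its roots `r`, none of which lies
on the unit circle by hyperbolicity. The monomial `c T^m` is invertible, and each `T - r` is
inverted in `ℓ¹(ℤ)` by a geometric series: expand `T⁻¹ (1 - r T⁻¹)⁻¹` when `‖r‖ < 1` and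
`-r⁻¹ (1 - r⁻¹ T)⁻¹` when `‖r‖ > 1`. Since convolution makes `ℓ¹(ℤ)` a commutative monoid into
which Laurent polynomials embed multiplicatively, the product of these inverses inverts `P`.
-/

/-- Convolution product of bi-infinite sequences of complex numbers. -/
noncomputable def conv (A B : ℤ → ℂ) : ℤ → ℂ := fun n => ∑' i : ℤ, A i * B (n - i)

/-- The convolution product exists: the defining series converges absolutely at every index. -/
def ConvExists (A B : ℤ → ℂ) : Prop := ∀ n : ℤ, Summable fun i : ℤ => ‖A i * B (n - i)‖

/-- Absolutely summable bi-infinite sequence. -/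
def AbsSummable (A : ℤ → ℂ) : Prop := Summable fun n : ℤ => ‖A n‖

/-- Bounded bi-infinite sequence. -/
def BddSeq (A : ℤ → ℂ) : Prop := ∃ L : ℝ, ∀ n : ℤ, ‖A n‖ ≤ L

/-- The identity for the convolution product. -/
noncomputable def convId : ℤ → ℂ := fun n => if n = 0 then 1 else 0

section Convolution

variable {A B C : ℤ → ℂ}

lemma conv_eq_sum (s : Finset ℤ) (hs : ∀ i ∉ s, A i = 0) (B : ℤ → ℂ) (n : ℤ) :
    conv A B n = ∑ i ∈ s, A i * B (n - i) :=
  tsum_eq_sum fun i hi => by rw [hs i hi, zero_mul]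

lemma conv_comm (A B : ℤ → ℂ) : conv A B = conv B A := by
  funext n
  rw [conv, conv, ← (Equiv.subLeft n).tsum_eq]
  simp [mul_comm]

lemma convId_conv (B : ℤ → ℂ) : conv convId B = B := by
  funext n
  rw [conv_eq_sum (A := convId) {0} fun i hi => if_neg (Finset.notMem_singleton.1 hi)]
  simp [convId]

lemma AbsSummable.of_hasFiniteSupport (h : A.HasFiniteSupport) : AbsSummable A :=
  summable_of_ne_finset_zero (s := h.toFinset) fun i hi => by
    simpa using Set.Finite.mem_toFinset h |>.not.1 hi

lemma AbsSummable.norm_le_tsum (hA : AbsSummable A) (n : ℤ) : ‖A n‖ ≤ ∑' i, ‖A i‖ :=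
  hA.le_tsum n fun _ _ => norm_nonneg _

lemma AbsSummable.summable_norm_mul_sub (hA : AbsSummable A) (hB : AbsSummable B) :
    Summable fun p : ℤ × ℤ => ‖A p.2‖ * ‖B (p.1 - p.2)‖ := by
  let e : ℤ × ℤ ≃ ℤ × ℤ :=
    ⟨fun p => (p.2, p.1 - p.2), fun q => (q.1 + q.2, q.1), fun p => by simp, fun q => by simp⟩
  refine (e.summable_iff (f := fun q : ℤ × ℤ => ‖A q.1‖ * ‖B q.2‖)).2 ?_
  exact hA.mul_of_nonneg hB (fun _ => norm_nonneg _) fun _ => norm_nonneg _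

lemma absSummable_conv (hA : AbsSummable A) (hB : AbsSummable B) : AbsSummable (conv A B) := by
  have hprod := (hA.summable_norm_mul_sub hB).prod_factor
  refine .of_nonneg_of_le (fun n => norm_nonneg _) (fun n => ?_) (hA.summable_norm_mul_sub hB).prod
  calc ‖conv A B n‖ ≤ ∑' i, ‖A i * B (n - i)‖ :=
        norm_tsum_le_tsum_norm (by simpa only [norm_mul] using hprod n)
    _ = ∑' i, ‖A i‖ * ‖B (n - i)‖ := by simp

lemma conv_assoc (hA : AbsSummable A) (hB : AbsSummable B) (hC : AbsSummable C) :
    conv (conv A B) C = conv A (conv B C) := by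
  funext n
  have hF : Summable fun p : ℤ × ℤ => A p.2 * B (p.1 - p.2) * C (n - p.1) := by
    refine .of_norm_bounded ((hA.summable_norm_mul_sub hB).mul_right (∑' i, ‖C i‖)) fun p => ?_
    rw [norm_mul, norm_mul]
    exact mul_le_mul_of_nonneg_left (hC.norm_le_tsum _) (by positivity)
  calc conv (conv A B) C n = ∑' j, ∑' i, A i * B (j - i) * C (n - j) := by
        simp only [conv, tsum_mul_right]
    _ = ∑' i, ∑' j, A i * B (j - i) * C (n - j) :=
        (hF.tsum_comm (f := fun j i => A i * B (j - i) * C (n - j))).symm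
    _ = conv A (conv B C) n := by
        refine tsum_congr fun i => ?_
        rw [conv, ← tsum_mul_left, ← (Equiv.addRight i).tsum_eq]
        simp only [Equiv.coe_addRight, add_sub_cancel_right, mul_assoc, sub_sub, add_comm i]

end Convolution

lemma absSummable_convId : AbsSummable convId :=
  .of_hasFiniteSupport <| (Set.finite_singleton 0).subset fun _ hn =>
    by_contra fun h => hn (if_neg h)

def L1Seq : Type := {A : ℤ → ℂ // AbsSummable A}

noncomputable instance : CommMonoid L1Seq where
  mul A B := ⟨conv A.1 B.1, absSummable_conv A.2 B.2⟩
  one := ⟨convId, absSummable_convId⟩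
  mul_assoc A B C := Subtype.ext (conv_assoc A.2 B.2 C.2)
  one_mul A := Subtype.ext (convId_conv A.1)
  mul_one A := Subtype.ext ((conv_comm _ _).trans (convId_conv A.1))
  mul_comm A B := Subtype.ext (conv_comm A.1 B.1)

open LaurentPolynomial

lemma conv_coeff_eq_sum (f : ℂ[T;T⁻¹]) (B : ℤ → ℂ) (n : ℤ) :
    conv f.coeff B n = f.coeff.sum fun i a => a * B (n - i) :=
  conv_eq_sum _ (fun _ hi => Finsupp.notMem_support_iff.1 hi) B n

noncomputable def LaurentPolynomial.toL1Seq : ℂ[T;T⁻¹] →* L1Seq where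
  toFun f := ⟨f.coeff, .of_hasFiniteSupport f.coeff.hasFiniteSupport⟩
  map_one' := by
    refine Subtype.ext (funext fun n => ?_)
    change (1 : ℂ[T;T⁻¹]).coeff n = convId n
    rw [AddMonoidAlgebra.one_def, AddMonoidAlgebra.coeff_single, Finsupp.single_apply, convId]
    simp only [eq_comm]
  map_mul' f g := by
    refine Subtype.ext (funext fun n => ?_)
    change (f * g).coeff n = conv f.coeff g.coeff n
    rw [conv_coeff_eq_sum, AddMonoidAlgebra.coeff_mul_apply_left]
    simp [neg_add_eq_sub]

/-- The expansion `∑_{k ≥ 0} c ^ k T ^ (s * k)` of `(1 - c T ^ s)⁻¹` for `s = ± 1`. -/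
noncomputable def geomSeq (c : ℂ) (s : ℤ) : ℤ → ℂ :=
  fun n => if 0 ≤ s * n then c ^ (s * n).toNat else 0

lemma absSummable_geomSeq {c : ℂ} (hc : ‖c‖ < 1) {s : ℤ} (hs : s ≠ 0) :
    AbsSummable (geomSeq c s) := by
  have hgeom : Summable fun k : ℤ => if 0 ≤ k then ‖c‖ ^ k.toNat else 0 := by
    refine .of_nat_of_neg (by simpa using summable_geometric_of_lt_one (norm_nonneg c) hc) ?_
    refine summable_of_ne_finset_zero (s := {0}) fun k hk => ?_
    simp_all
  have hinj : Function.Injective (s * ·) := mul_right_injective₀ hs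
  refine (hgeom.comp_injective hinj).congr fun n => ?_
  simp only [geomSeq, Function.comp_apply]
  split_ifs <;> simp

lemma conv_one_sub_C_mul_T (c : ℂ) {s : ℤ} (hs : s ≠ 0) (B : ℤ → ℂ) (n : ℤ) :
    conv (1 - C c * T s : ℂ[T;T⁻¹]).coeff B n = B n - c * B (n - s) := by
  have hcoeff : ∀ i, (1 - C c * T s : ℂ[T;T⁻¹]).coeff i =
      (if i = 0 then 1 else 0) - if i = s then c else 0 := fun i => by
    rw [← single_eq_C_mul_T]
    simp only [AddMonoidAlgebra.coeff_sub, AddMonoidAlgebra.one_def, AddMonoidAlgebra.coeff_single,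
      Finsupp.sub_apply, Finsupp.single_apply, eq_comm]
  rw [conv_eq_sum {0, s} ?_, Finset.sum_pair hs.symm]
  · rw [hcoeff, hcoeff]
    simp [hs, hs.symm, sub_eq_add_neg]
  · intro i hi
    rw [hcoeff]
    simp_all

lemma conv_one_sub_C_mul_T_geomSeq (c : ℂ) {s : ℤ} (hs : s * s = 1) :
    conv (1 - C c * T s : ℂ[T;T⁻¹]).coeff (geomSeq c s) = convId := by
  funext n
  have hs0 : s ≠ 0 := left_ne_zero_of_mul_eq_one hs
  rw [conv_one_sub_C_mul_T c hs0]
  have hshift : s * (n - s) = s * n - 1 := by linear_combination -hs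
  simp only [geomSeq, convId, hshift]
  rcases lt_trichotomy (s * n) 0 with hneg | hzero | hpos
  · have hn : n ≠ 0 := by rintro rfl; simp at hneg
    simp [hn, hneg.not_ge, (hneg.trans (by norm_num : (0 : ℤ) < 1)).not_ge]
  · have hn : n = 0 := by simpa [hs0] using hzero
    simp [hn]
  · have hn : n ≠ 0 := by rintro rfl; simp at hpos
    have hpos' : 0 ≤ s * n - 1 := by omega
    have htoNat : (s * n).toNat = (s * n - 1).toNat + 1 := by omega
    rw [if_pos hpos.le, if_pos hpos', if_neg hn, htoNat, pow_succ]
    ring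

lemma isUnit_toL1Seq_one_sub_C_mul_T {c : ℂ} (hc : ‖c‖ < 1) {s : ℤ} (hs : s * s = 1) :
    IsUnit (toL1Seq (1 - C c * T s)) :=
  IsUnit.of_mul_eq_one ⟨geomSeq c s, absSummable_geomSeq hc (left_ne_zero_of_mul_eq_one hs)⟩
    (Subtype.ext (conv_one_sub_C_mul_T_geomSeq c hs))

lemma isUnit_toL1Seq_X_sub_C {r : ℂ} (hr : ‖r‖ ≠ 1) :
    IsUnit (toL1Seq (Polynomial.toLaurent (Polynomial.X - Polynomial.C r))) := by
  rw [map_sub, Polynomial.toLaurent_X, Polynomial.toLaurent_C]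
  rcases hr.lt_or_gt with hlt | hgt
  · have hfactor : T 1 - C r = T 1 * (1 - C r * T (-1)) := by
      rw [mul_sub, mul_one, mul_left_comm, ← T_add, add_neg_cancel, T_zero, mul_one]
    rw [hfactor, map_mul]
    exact ((isUnit_T 1).map toL1Seq).mul (isUnit_toL1Seq_one_sub_C_mul_T hlt (by norm_num))
  · have hr0 : r ≠ 0 := norm_pos_iff.1 (one_pos.trans hgt)
    have hfactor : T 1 - C r = C (-r) * (1 - C r⁻¹ * T 1) := by
      rw [mul_sub, mul_one, ← mul_assoc, ← map_mul, neg_mul, mul_inv_cancel₀ hr0, map_neg,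
        map_neg, map_one, neg_one_mul]
      abel
    rw [hfactor, map_mul]
    refine (((isUnit_iff_ne_zero.2 (neg_ne_zero.2 hr0)).map C).map toL1Seq).mul
      (isUnit_toL1Seq_one_sub_C_mul_T ?_ (by norm_num))
    rw [norm_inv]
    exact inv_lt_one_of_one_lt₀ hgt

lemma isUnit_toL1Seq_toLaurent {Q : Polynomial ℂ} (hQ : Q ≠ 0)
    (h : ∀ z : ℂ, ‖z‖ = 1 → Q.eval z ≠ 0) : IsUnit (toL1Seq (Polynomial.toLaurent Q)) := by
  rw [← Polynomial.C_leadingCoeff_mul_prod_multiset_X_sub_C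
      (IsAlgClosed.card_roots_eq_natDegree (p := Q)),
    map_mul, map_mul, map_multiset_prod, map_multiset_prod, Multiset.map_map, Multiset.map_map]
  refine ((isUnit_iff_ne_zero.2 (Polynomial.leadingCoeff_ne_zero.2 hQ)).map
    (toL1Seq.comp (Polynomial.toLaurent.toMonoidHom.comp Polynomial.C.toMonoidHom))).mul
    (IsUnit.multisetProd_iff.2 fun u hu => ?_)
  obtain ⟨r, hr, rfl⟩ := Multiset.mem_map.1 hu
  exact isUnit_toL1Seq_X_sub_C fun hr1 => h r hr1 (Polynomial.isRoot_of_mem_roots hr)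

lemma LaurentPolynomial.eval₂_id_eq_smeval {R : Type*} [CommSemiring R] (f : R[T;T⁻¹])
    (z : Rˣ) : eval₂ (RingHom.id R) z f = f.smeval z := by
  induction f using LaurentPolynomial.induction_on' with
  | add p q hp hq => rw [map_add, smeval_add, hp, hq]
  | C_mul_T n a => rw [eval₂_C_mul_T, smeval_C_mul_T_n, RingHom.id_apply, smul_eq_mul]

lemma LaurentPolynomial.tsum_coeff_mul_zpow (f : ℂ[T;T⁻¹]) (z : ℂˣ) :
    ∑' n, f.coeff n * (z : ℂ) ^ n = eval₂ (RingHom.id ℂ) z f := by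
  rw [eval₂_id_eq_smeval, smeval_eq_sum, Finsupp.sum,
    tsum_eq_sum fun n hn => by rw [Finsupp.notMem_support_iff.1 hn, zero_mul]]
  simp [Units.val_zpow_eq_zpow_val]

lemma isUnit_toL1Seq {f : ℂ[T;T⁻¹]} (hf : f ≠ 0)
    (h : ∀ z : ℂˣ, ‖(z : ℂ)‖ = 1 → eval₂ (RingHom.id ℂ) z f ≠ 0) : IsUnit (toL1Seq f) := by
  obtain ⟨n, Q, hQ⟩ := exists_T_pow f
  have hfQ : f = Polynomial.toLaurent Q * T (-n) := by
    rw [hQ, mul_assoc, ← T_add, add_neg_cancel, T_zero, mul_one]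
  rw [hfQ, map_mul]
  refine (isUnit_toL1Seq_toLaurent ?_ fun z hz hQz => ?_).mul ((isUnit_T _).map _)
  · rintro rfl
    exact hf (by simpa [(isUnit_T _).mul_left_eq_zero] using hQ.symm)
  · have hz0 : z ≠ 0 := by rintro rfl; simp at hz
    refine h (Units.mk0 z hz0) hz ?_
    rw [hfQ, map_mul, eval₂_toLaurent, Polynomial.eval₂_id, Units.val_mk0, hQz, zero_mul]

theorem stmt6 (P : ℤ → ℂ) (hfin : (Function.support P).Finite) (hne : P ≠ 0)
    (hhyp : ∀ z : ℂ, ‖z‖ = 1 → (∑' n : ℤ, P n * z ^ n) ≠ 0) :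
    ∃ B : ℤ → ℂ, AbsSummable B ∧ conv P B = convId := by
  let f : ℂ[T;T⁻¹] := .ofCoeff (Finsupp.ofSupportFinite P hfin)
  have hfP : ⇑f.coeff = P := rfl
  have hf : f ≠ 0 := fun h => hne (by rw [← hfP, h]; rfl)
  obtain ⟨u, hu⟩ := isUnit_toL1Seq hf fun z hz => by
    rw [← tsum_coeff_mul_zpow, hfP]
    exact hhyp z hz
  refine ⟨(↑u⁻¹ : L1Seq).1, (↑u⁻¹ : L1Seq).2, ?_⟩
  have hinv := congrArg Subtype.val u.mul_inv
  rwa [hu] at hinv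
end

section
/- Let P(z) = a_h z^h + a_{h+1} z^{h+1} + ⋯ + a_n z^n be a primitive integer polynomial with a_h ≠ 0 and a_n ≠ 0. Then dim Ω_P = n - h, i.e., the projection of Ω_P onto coordinates (x_0, …, x_{k-1}) is all of 𝕋^k if and only if k ≤ n - h. -/
/-- A finitely supported integer sequence (Laurent polynomial) is primitive if the
gcd of its coefficients is 1. -/
def Primitive (P : ℤ → ℤ) : Prop := ∀ d : ℤ, (∀ n : ℤ, d ∣ P n) → IsUnit d

/-- The stream zeros of `P`: the kernel in `𝕋^ℤ` of the convolution action of `P`. -/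
def streamZeros (P : ℤ → ℤ) : Set (ℤ → UnitAddCircle) :=
  {x | ∀ m : ℤ, (∑ᶠ n : ℤ, P n • x (m - n)) = 0}

/-- The representative in `[0,1)` of a point of the torus `𝕋 = ℝ/ℤ`. -/
noncomputable def rep (t : UnitAddCircle) : ℝ := ((AddCircle.equivIco 1 0) t : ℝ)

/-- `k₊ = min(∑_{aₙ<0} aₙ + 1, 0)`. -/
noncomputable def kLow (P : ℤ → ℤ) : ℤ := min ((∑ᶠ n : ℤ, min (P n) 0) + 1) 0

/-- `k* = max(∑_{aₙ>0} aₙ - 1, 0)`. -/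
noncomputable def kHigh (P : ℤ → ℤ) : ℤ := max ((∑ᶠ n : ℤ, max (P n) 0) - 1) 0

/-!
A point of `Ω_P` is a two-sided solution of the linear recurrence `∑ⱼ aⱼ x_{m-j} = 0`. Since the
extreme coefficients `a_h` and `a_n` are nonzero, over `ℝ` such a recurrence can be solved forwards
and backwards from any window of `n - h` consecutive values; reducing a real solution modulo `ℤ`
shows that every point of `𝕋^{n-h}` is the window of a point of `Ω_P`. Conversely, the relation at
`m = n` determines `a_n x_0` from `x_1, …, x_{n-h}`, and `a_n x_0` is not identically zero on `𝕋`,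
so no window of length `n - h + 1` can be arbitrary.
-/

section Recurrence

variable {K : Type*} [Field K] (a : ℤ → K) (h n : ℤ)

noncomputable def solveRecurrence (w : ℤ → K) (t : ℤ) : K :=
  if t < 0 then
    -(∑ j ∈ (Finset.Ico h n).attach, a j * solveRecurrence w (t + n - j)) / a n
  else if t < n - h then w t
  else
    -(∑ j ∈ (Finset.Ioc h n).attach, a j * solveRecurrence w (t + h - j)) / a h
termination_by (if t < 0 then -t else t - (n - h) + 1).toNat
decreasing_by
  · have := Finset.mem_Ico.mp j.2; simp_wf; split_ifs <;> omega
  · have := Finset.mem_Ioc.mp j.2; simp_wf; split_ifs <;> omega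

variable {a h n}

theorem solveRecurrence_of_mem_Ico (w : ℤ → K) {t : ℤ} (ht : t ∈ Set.Ico 0 (n - h)) :
    solveRecurrence a h n w t = w t := by
  rw [solveRecurrence, if_neg (not_lt.mpr ht.1), if_pos ht.2]

theorem mul_solveRecurrence_of_lt (hn : a n ≠ 0) (w : ℤ → K) {m : ℤ} (hm : m < n) :
    a n * solveRecurrence a h n w (m - n) =
      -∑ j ∈ Finset.Ico h n, a j * solveRecurrence a h n w (m - j) := by
  rw [solveRecurrence, if_pos (by omega), mul_div_cancel₀ _ hn,
    Finset.sum_attach _ fun j => a j * solveRecurrence a h n w (m - n + n - j)]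
  simp only [sub_add_cancel]

theorem mul_solveRecurrence_of_le (hhn : h ≤ n) (hh : a h ≠ 0) (w : ℤ → K) {m : ℤ}
    (hm : n ≤ m) :
    a h * solveRecurrence a h n w (m - h) =
      -∑ j ∈ Finset.Ioc h n, a j * solveRecurrence a h n w (m - j) := by
  rw [solveRecurrence, if_neg (by omega), if_neg (by omega), mul_div_cancel₀ _ hh,
    Finset.sum_attach _ fun j => a j * solveRecurrence a h n w (m - h + h - j)]
  simp only [sub_add_cancel]

theorem sum_mul_solveRecurrence (hhn : h ≤ n) (hh : a h ≠ 0) (hn : a n ≠ 0) (w : ℤ → K)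
    (m : ℤ) : ∑ j ∈ Finset.Icc h n, a j * solveRecurrence a h n w (m - j) = 0 := by
  rcases lt_or_ge m n with hm | hm
  · rw [← Finset.Ico_insert_right hhn, Finset.sum_insert Finset.right_notMem_Ico,
      mul_solveRecurrence_of_lt hn w hm, neg_add_cancel]
  · rw [← Finset.Ioc_insert_left hhn, Finset.sum_insert Finset.left_notMem_Ioc,
      mul_solveRecurrence_of_le hhn hh w hm, neg_add_cancel]

end Recurrence

section StreamZeros

variable {P : ℤ → ℤ} {h n : ℤ}

theorem finsum_zsmul_eq_sum_Icc {M : Type*} [AddCommGroup M]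
    (hsupp : ∀ m : ℤ, m < h ∨ n < m → P m = 0) (y : ℤ → M) :
    ∑ᶠ j : ℤ, P j • y j = ∑ j ∈ Finset.Icc h n, P j • y j := by
  refine finsum_eq_sum_of_support_subset _ fun j hj => ?_
  by_contra hj'
  simp only [Finset.coe_Icc, Set.mem_Icc, not_and_or, not_le] at hj'
  simp [hsupp j hj'] at hj

theorem mem_streamZeros_iff (hsupp : ∀ m : ℤ, m < h ∨ n < m → P m = 0)
    (x : ℤ → UnitAddCircle) :
    x ∈ streamZeros P ↔ ∀ m : ℤ, ∑ j ∈ Finset.Icc h n, P j • x (m - j) = 0 := by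
  simp only [streamZeros, Set.mem_ofPred_eq, finsum_zsmul_eq_sum_Icc hsupp]

theorem exists_mem_streamZeros_eqOn_Ico (hhn : h ≤ n) (hh : P h ≠ 0) (hn : P n ≠ 0)
    (hsupp : ∀ m : ℤ, m < h ∨ n < m → P m = 0) (w : ℤ → UnitAddCircle) :
    ∃ x ∈ streamZeros P, Set.EqOn x w (Set.Ico 0 (n - h)) := by
  choose r hr using fun t => QuotientAddGroup.mk_surjective (w t)
  set y := solveRecurrence (fun j => (P j : ℝ)) h n r
  refine ⟨fun t => (y t : UnitAddCircle), (mem_streamZeros_iff hsupp _).mpr fun m => ?_,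
    fun t ht => by simp only [y, solveRecurrence_of_mem_Ico r ht, hr]⟩
  have hsum := congrArg (QuotientAddGroup.mk' (AddSubgroup.zmultiples (1 : ℝ)))
    (sum_mul_solveRecurrence (a := fun j => (P j : ℝ)) hhn (Int.cast_ne_zero.mpr hh)
      (Int.cast_ne_zero.mpr hn) r m)
  simp only [map_sum, map_zero, ← zsmul_eq_mul, map_zsmul] at hsum
  exact hsum

theorem zsmul_eq_zero_of_mem_streamZeros (hhn : h ≤ n)
    (hsupp : ∀ m : ℤ, m < h ∨ n < m → P m = 0) {x : ℤ → UnitAddCircle} (hx : x ∈ streamZeros P)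
    (hzero : ∀ i : ℤ, 0 < i → i ≤ n - h → x i = 0) : P n • x 0 = 0 := by
  have hrel := (mem_streamZeros_iff hsupp x).mp hx n
  rwa [← Finset.Ico_insert_right hhn, Finset.sum_insert Finset.right_notMem_Ico, sub_self,
    Finset.sum_eq_zero fun j hj => by
      rw [Finset.mem_Ico] at hj
      rw [hzero (n - j) (by omega) (by omega), zsmul_zero], add_zero] at hrel

end StreamZeros

theorem UnitAddCircle.exists_zsmul_ne_zero {z : ℤ} (hz : z ≠ 0) :
    ∃ t : UnitAddCircle, z • t ≠ 0 := by
  refine ⟨((2 * z : ℝ)⁻¹ : ℝ), ?_⟩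
  have hhalf : z • ((2 * z : ℝ)⁻¹ : ℝ) = (2⁻¹ : ℝ) := by
    rw [zsmul_eq_mul]
    field_simp [Int.cast_ne_zero.mpr hz]
  rw [← AddCircle.coe_zsmul, hhalf, Ne,
    AddCircle.coe_eq_zero_iff_of_mem_Ico (p := (1 : ℝ)) ⟨by norm_num, by norm_num⟩]
  norm_num

theorem stmt11_general (P : ℤ → ℤ) (h n : ℤ) (hhn : h ≤ n)
    (hh : P h ≠ 0) (hn : P n ≠ 0) (hsupp : ∀ m : ℤ, m < h ∨ n < m → P m = 0) :
    ∀ k : ℕ,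
      ((∀ v : Fin k → UnitAddCircle, ∃ x ∈ streamZeros P, ∀ i : Fin k, x (i : ℤ) = v i) ↔
        (k : ℤ) ≤ n - h) := by
  intro k
  constructor
  · intro hsurj
    by_contra! hk
    obtain ⟨t, ht⟩ := UnitAddCircle.exists_zsmul_ne_zero hn
    obtain ⟨x, hx, hxv⟩ := hsurj fun i => if (i : ℕ) = 0 then t else 0
    refine ht ?_
    have hx0 : x 0 = t := by simpa using hxv ⟨0, by omega⟩
    rw [← hx0]
    refine zsmul_eq_zero_of_mem_streamZeros hhn hsupp hx fun i hi0 hin => ?_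
    lift i to ℕ using hi0.le
    simpa [show i ≠ 0 by omega] using hxv ⟨i, by omega⟩
  · intro hk v
    obtain ⟨x, hx, hxv⟩ := exists_mem_streamZeros_eqOn_Ico hhn hh hn hsupp
      fun t => if ht : t.toNat < k then v ⟨t.toNat, ht⟩ else 0
    refine ⟨x, hx, fun i => ?_⟩
    simpa using hxv ⟨Int.natCast_nonneg i, by omega⟩

theorem stmt11 (P : ℤ → ℤ) (h n : ℤ) (hhn : h ≤ n) (hprim : Primitive P)
    (hh : P h ≠ 0) (hn : P n ≠ 0) (hsupp : ∀ m : ℤ, m < h ∨ n < m → P m = 0) :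
    ∀ k : ℕ,
      ((∀ v : Fin k → UnitAddCircle, ∃ x ∈ streamZeros P, ∀ i : Fin k, x (i : ℤ) = v i) ↔
        (k : ℤ) ≤ n - h) :=
  stmt11_general P h n hhn hh hn hsupp
end

section
/- Let P(z) = a₂z² + a₁z + 1 with integer coefficients, a₂ ≠ 0, and D = a₁² - 4a₂ > 0, with distinct real roots θ₁, θ₂. Then a 2×2 integer matrix B commutes with M_P and has det B = ±1 if and only if B has the form ((p, p'), (-a₂p', p - a₁p')) for integers p, p' satisfying (p - a₁p'/2)² - (D/4)p'² = ±1. -/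
/-!
Comparing the first rows of `B * M` and `M * B` expresses the second row of `B` through its first
row, which gives the commutant of `M`. The determinant `p ^ 2 - a₁ p p' + a₂ p' ^ 2` of a matrix in
the commutant is the stated quadratic form with the square completed.
-/

open Matrix

theorem commute_companion_iff {R : Type*} [CommRing R] (a₁ a₂ : R)
    (B : Matrix (Fin 2) (Fin 2) R) :
    B * !![0, 1; -a₂, -a₁] = !![0, 1; -a₂, -a₁] * B ↔
      ∃ p p' : R, B = !![p, p'; -a₂ * p', p - a₁ * p'] := by
  constructor
  · intro hcomm
    have h00 := congrFun (congrFun hcomm 0) 0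
    have h01 := congrFun (congrFun hcomm 0) 1
    simp only [mul_apply, Fin.sum_univ_two, of_apply, cons_val', cons_val_zero, cons_val_one,
      empty_val', cons_val_fin_one] at h00 h01
    have h10 : B 1 0 = -a₂ * B 0 1 := by linear_combination -h00
    have h11 : B 1 1 = B 0 0 - a₁ * B 0 1 := by linear_combination -h01
    exact ⟨B 0 0, B 0 1, (eta_fin_two B).trans (by rw [h10, h11])⟩
  · rintro ⟨p, p', rfl⟩
    ext i j
    fin_cases i <;> fin_cases j <;> simp [mul_apply, Fin.sum_univ_two] <;> ring

theorem cast_det_commutant_companion (a₁ a₂ p p' : ℤ) :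
    ((!![p, p'; -a₂ * p', p - a₁ * p'].det : ℤ) : ℚ) =
      ((p : ℚ) - a₁ * p' / 2) ^ 2 - ((a₁ ^ 2 - 4 * a₂ : ℚ) / 4) * p' ^ 2 := by
  rw [det_fin_two_of]
  push_cast
  ring

theorem stmt18_general (a₁ a₂ : ℤ)
    (M : Matrix (Fin 2) (Fin 2) ℤ) (hM : M = !![0, 1; -a₂, -a₁])
    (B : Matrix (Fin 2) (Fin 2) ℤ) :
    (B * M = M * B ∧ (B.det = 1 ∨ B.det = -1)) ↔
      ∃ p p' : ℤ, B = !![p, p'; -a₂ * p', p - a₁ * p'] ∧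
        (((p : ℚ) - a₁ * p' / 2) ^ 2 - ((a₁ ^ 2 - 4 * a₂ : ℚ) / 4) * p' ^ 2 = 1 ∨
         ((p : ℚ) - a₁ * p' / 2) ^ 2 - ((a₁ ^ 2 - 4 * a₂ : ℚ) / 4) * p' ^ 2 = -1) := by
  subst hM
  rw [commute_companion_iff]
  constructor
  · rintro ⟨⟨p, p', rfl⟩, hdet⟩
    refine ⟨p, p', rfl, ?_⟩
    rw [← cast_det_commutant_companion]
    exact_mod_cast hdet
  · rintro ⟨p, p', rfl, hdet⟩
    rw [← cast_det_commutant_companion] at hdet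
    exact ⟨⟨p, p', rfl⟩, by exact_mod_cast hdet⟩

theorem stmt18 (a₁ a₂ : ℤ) (ha₂ : a₂ ≠ 0) (hD : 0 < a₁ ^ 2 - 4 * a₂)
    (M : Matrix (Fin 2) (Fin 2) ℤ) (hM : M = !![0, 1; -a₂, -a₁])
    (B : Matrix (Fin 2) (Fin 2) ℤ) :
    (B * M = M * B ∧ (B.det = 1 ∨ B.det = -1)) ↔
      ∃ p p' : ℤ, B = !![p, p'; -a₂ * p', p - a₁ * p'] ∧
        (((p : ℚ) - a₁ * p' / 2) ^ 2 - ((a₁ ^ 2 - 4 * a₂ : ℚ) / 4) * p' ^ 2 = 1 ∨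
         ((p : ℚ) - a₁ * p' / 2) ^ 2 - ((a₁ ^ 2 - 4 * a₂ : ℚ) / 4) * p' ^ 2 = -1) :=
  stmt18_general a₁ a₂ M hM B
end

section
/- Let P(z) = a₂z² + a₁z + 1 with integer coefficients, a₂ ≠ 0, and D = a₁² - 4a₂ = 0 (so a₁ = 2c for an integer c and a₂ = c²). Then the group Saut_P of integer 2×2 matrices B with det B = ±1 and B M_P = M_P B is exactly {±((1 + cp', p'), (-c²p', 1 - cp')) : p' ∈ ℤ} ∪ {±((-1 + cp', p'), (-c²p', -1 - cp')) : p' ∈ ℤ}, and the quotient Saut_P / {±Id} is an infinite cyclic group. -/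
/-!
The characteristic polynomial of `M_P` is `(X + c)²`, so `M_P = N - c • 1` with
`N = !![c, 1; -c², -c]` and `N * N = 0`. Commuting with `M_P` is commuting with the non-scalar `N`,
which forces `B = a • 1 + b • N`; then `det B = a²`, so `a = ±1`. Since `N * N = 0`, `p ↦ 1 + p • N`
is a homomorphism from `ℤ`, i.e. `1 + p • N = (1 + N) ^ p`, so `Saut_P / {±1}` is generated by
`1 + N`, which has infinite order.
-/

open Matrix

section SquareZero

variable {A : Type*} [Ring A] {x : A}

theorem one_add_zsmul_mul_one_add_zsmul (hx : x * x = 0) (s t : ℤ) :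
    (1 + s • x) * (1 + t • x) = 1 + (s + t) • x := by
  simp only [add_mul, mul_add, one_mul, mul_one, smul_mul_smul_comm, hx, smul_zero, add_smul]
  abel

theorem one_add_pow_of_mul_self_eq_zero (hx : x * x = 0) (n : ℕ) :
    (1 + x) ^ n = 1 + (n : ℤ) • x := by
  induction n with
  | zero => simp
  | succ n ih =>
    have step := one_add_zsmul_mul_one_add_zsmul hx n 1
    rw [one_zsmul] at step
    rw [pow_succ, ih, step, Nat.cast_succ]

theorem exists_one_add_pow_eq_or_mul_one_add_pow_eq_one (hx : x * x = 0) (p : ℤ) :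
    ∃ n : ℕ, 1 + p • x = (1 + x) ^ n ∨ (1 + p • x) * (1 + x) ^ n = 1 := by
  refine ⟨p.natAbs, ?_⟩
  rw [one_add_pow_of_mul_self_eq_zero hx]
  rcases Int.natAbs_eq p with hp | hp
  · exact Or.inl (by rw [← hp])
  · right
    rw [one_add_zsmul_mul_one_add_zsmul hx, hp]
    simp

end SquareZero

section NilPart

variable {R : Type*} [CommRing R]

def nilPart (c : R) : Matrix (Fin 2) (Fin 2) R := !![c, 1; -c ^ 2, -c]

theorem nilPart_mul_self (c : R) : nilPart c * nilPart c = 0 := by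
  ext i j
  fin_cases i <;> fin_cases j <;> simp [nilPart] <;> ring

theorem companion_eq_nilPart_sub (c : R) :
    !![0, 1; -c ^ 2, -(2 * c)] = nilPart c - c • 1 := by
  ext i j
  fin_cases i <;> fin_cases j <;> simp [nilPart, two_mul, sub_eq_add_neg]

theorem commute_companion_iff_s19 {c : R} {B : Matrix (Fin 2) (Fin 2) R} :
    Commute B !![0, 1; -c ^ 2, -(2 * c)] ↔ Commute B (nilPart c) := by
  have hscalar : Commute B (c • 1) := (Commute.one_right B).smul_right c
  rw [companion_eq_nilPart_sub]
  exact ⟨fun h ↦ by simpa using h.add_right hscalar, fun h ↦ h.sub_right hscalar⟩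

theorem commute_nilPart_iff {c : R} {B : Matrix (Fin 2) (Fin 2) R} :
    Commute B (nilPart c) ↔ ∃ a b : R, B = a • 1 + b • nilPart c := by
  constructor
  · intro h
    have h00 := congrFun (congrFun h 0) 0
    have h01 := congrFun (congrFun h 0) 1
    simp only [nilPart, mul_apply, of_apply, cons_val', cons_val_zero, cons_val_one,
      cons_val_fin_one, Fin.sum_univ_two, mul_neg, one_mul, mul_one] at h00 h01
    have h10 : B 1 0 = -c ^ 2 * B 0 1 := by linear_combination -h00
    have h11 : B 1 1 = B 0 0 - 2 * c * B 0 1 := by linear_combination -h01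
    refine ⟨B 0 0 - c * B 0 1, B 0 1, ?_⟩
    ext i j
    fin_cases i <;> fin_cases j <;> simp [nilPart, h10, h11] <;> ring
  · rintro ⟨a, b, rfl⟩
    exact ((Commute.one_left _).smul_left a).add_left ((Commute.refl _).smul_left b)

theorem det_smul_one_add_smul_nilPart (a b c : R) : (a • 1 + b • nilPart c).det = a ^ 2 := by
  simp [nilPart, one_fin_two, det_fin_two_of]
  ring

theorem isUnit_det_and_commute_nilPart_iff {c : R} {B : Matrix (Fin 2) (Fin 2) R} :
    (IsUnit B.det ∧ Commute B (nilPart c)) ↔ ∃ a b : R, IsUnit a ∧ B = a • 1 + b • nilPart c := by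
  rw [commute_nilPart_iff]
  constructor
  · rintro ⟨hdet, a, b, rfl⟩
    rw [det_smul_one_add_smul_nilPart, isUnit_pow_iff two_ne_zero] at hdet
    exact ⟨a, b, hdet, rfl⟩
  · rintro ⟨a, b, ha, rfl⟩
    rw [det_smul_one_add_smul_nilPart]
    exact ⟨ha.pow 2, a, b, rfl⟩

theorem one_add_smul_nilPart (p c : R) :
    1 + p • nilPart c = !![1 + c * p, p; -c ^ 2 * p, 1 - c * p] := by
  ext i j
  fin_cases i <;> fin_cases j <;> simp [nilPart] <;> ring

theorem neg_one_add_smul_nilPart (p c : R) :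
    -(1 + (-p) • nilPart c) = !![-1 + c * p, p; -c ^ 2 * p, -1 - c * p] := by
  ext i j
  fin_cases i <;> fin_cases j <;> simp [nilPart] <;> ring

end NilPart

theorem det_eq_one_or_neg_one_and_commute_companion_iff (c : ℤ) (B : Matrix (Fin 2) (Fin 2) ℤ) :
    ((B.det = 1 ∨ B.det = -1) ∧ Commute B !![0, 1; -c ^ 2, -(2 * c)]) ↔
      ∃ p : ℤ, B = 1 + p • nilPart c ∨ -B = 1 + p • nilPart c := by
  rw [← Int.isUnit_iff, commute_companion_iff_s19, isUnit_det_and_commute_nilPart_iff]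
  constructor
  · rintro ⟨a, b, ha, rfl⟩
    rcases Int.isUnit_iff.1 ha with rfl | rfl
    · exact ⟨b, Or.inl (by rw [one_smul])⟩
    · exact ⟨-b, Or.inr (by rw [neg_add, neg_one_smul, neg_neg, neg_smul])⟩
  · rintro ⟨p, hB | hB⟩
    · exact ⟨1, p, isUnit_one, by rw [hB, one_smul]⟩
    · exact ⟨-1, -p, isUnit_one.neg, by rw [← neg_neg B, hB, neg_add, neg_one_smul, neg_smul]⟩

theorem one_add_nilPart_pow_apply_zero_one (c : ℤ) (n : ℕ) : ((1 + nilPart c) ^ n) 0 1 = n := by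
  rw [one_add_pow_of_mul_self_eq_zero (nilPart_mul_self c), one_add_smul_nilPart]
  simp

theorem stmt19_general (c a₁ a₂ : ℤ) (ha₁ : a₁ = 2 * c) (ha₂ : a₂ = c ^ 2)
    (M : Matrix (Fin 2) (Fin 2) ℤ) (hM : M = !![0, 1; -a₂, -a₁]) :
    (∀ B : Matrix (Fin 2) (Fin 2) ℤ,
      ((B.det = 1 ∨ B.det = -1) ∧ B * M = M * B) ↔
        ∃ p' : ℤ,
          B = !![1 + c * p', p'; -c ^ 2 * p', 1 - c * p'] ∨
          B = -!![1 + c * p', p'; -c ^ 2 * p', 1 - c * p'] ∨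
          B = !![-1 + c * p', p'; -c ^ 2 * p', -1 - c * p'] ∨
          B = -!![-1 + c * p', p'; -c ^ 2 * p', -1 - c * p']) ∧
    -- the quotient `Saut_P / {±Id}` is infinite cyclic:
    ∃ B₀ : Matrix (Fin 2) (Fin 2) ℤ,
      ((B₀.det = 1 ∨ B₀.det = -1) ∧ B₀ * M = M * B₀) ∧
      (∀ B : Matrix (Fin 2) (Fin 2) ℤ,
        ((B.det = 1 ∨ B.det = -1) ∧ B * M = M * B) →
          ∃ n : ℕ, B = B₀ ^ n ∨ -B = B₀ ^ n ∨ B * B₀ ^ n = 1 ∨ -B * B₀ ^ n = 1) ∧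
      (∀ n : ℕ, 0 < n → B₀ ^ n ≠ 1 ∧ B₀ ^ n ≠ -1) := by
  subst ha₁ ha₂ hM
  have hN := nilPart_mul_self c
  refine ⟨fun B ↦ (det_eq_one_or_neg_one_and_commute_companion_iff c B).trans ?_,
    1 + nilPart c, ?_, fun B hB ↦ ?_, fun n hn ↦ ?_⟩
  · simp only [← one_add_smul_nilPart, ← neg_one_add_smul_nilPart, neg_neg]
    constructor
    · rintro ⟨p, hB | hB⟩
      · exact ⟨p, Or.inl hB⟩
      · exact ⟨p, Or.inr (Or.inl (neg_eq_iff_eq_neg.1 hB))⟩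
    · rintro ⟨p, hB | hB | hB | hB⟩
      · exact ⟨p, Or.inl hB⟩
      · exact ⟨p, Or.inr (neg_eq_iff_eq_neg.2 hB)⟩
      · exact ⟨-p, Or.inr (neg_eq_iff_eq_neg.2 hB)⟩
      · exact ⟨-p, Or.inl hB⟩
  · exact (det_eq_one_or_neg_one_and_commute_companion_iff c _).2 ⟨1, Or.inl (by rw [one_smul])⟩
  · obtain ⟨p, hB | hB⟩ := (det_eq_one_or_neg_one_and_commute_companion_iff c B).1 hB
    · obtain ⟨n, hn | hn⟩ := exists_one_add_pow_eq_or_mul_one_add_pow_eq_one hN p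
      · exact ⟨n, Or.inl (hB.trans hn)⟩
      · exact ⟨n, Or.inr (Or.inr (Or.inl (hB ▸ hn)))⟩
    · obtain ⟨n, hn | hn⟩ := exists_one_add_pow_eq_or_mul_one_add_pow_eq_one hN p
      · exact ⟨n, Or.inr (Or.inl (hB.trans hn))⟩
      · exact ⟨n, Or.inr (Or.inr (Or.inr (hB ▸ hn)))⟩
  · have h01 := one_add_nilPart_pow_apply_zero_one c n
    constructor <;> intro h <;> simp [h] at h01 <;> omega

theorem stmt19 (c a₁ a₂ : ℤ) (ha₁ : a₁ = 2 * c) (ha₂ : a₂ = c ^ 2) (hne : a₂ ≠ 0)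
    (M : Matrix (Fin 2) (Fin 2) ℤ) (hM : M = !![0, 1; -a₂, -a₁]) :
    (∀ B : Matrix (Fin 2) (Fin 2) ℤ,
      ((B.det = 1 ∨ B.det = -1) ∧ B * M = M * B) ↔
        ∃ p' : ℤ,
          B = !![1 + c * p', p'; -c ^ 2 * p', 1 - c * p'] ∨
          B = -!![1 + c * p', p'; -c ^ 2 * p', 1 - c * p'] ∨
          B = !![-1 + c * p', p'; -c ^ 2 * p', -1 - c * p'] ∨
          B = -!![-1 + c * p', p'; -c ^ 2 * p', -1 - c * p']) ∧
    -- the quotient `Saut_P / {±Id}` is infinite cyclic: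
    ∃ B₀ : Matrix (Fin 2) (Fin 2) ℤ,
      ((B₀.det = 1 ∨ B₀.det = -1) ∧ B₀ * M = M * B₀) ∧
      (∀ B : Matrix (Fin 2) (Fin 2) ℤ,
        ((B.det = 1 ∨ B.det = -1) ∧ B * M = M * B) →
          ∃ n : ℕ, B = B₀ ^ n ∨ -B = B₀ ^ n ∨ B * B₀ ^ n = 1 ∨ -B * B₀ ^ n = 1) ∧
      (∀ n : ℕ, 0 < n → B₀ ^ n ≠ 1 ∧ B₀ ^ n ≠ -1) :=
  stmt19_general c a₁ a₂ ha₁ ha₂ M hM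
end
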